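/- In the setting of the two-graph generalized Hölder estimate (integers m, k, k' ≥ 1, H0 ∈ (1/2,1), t, t' ∈ ℝ, x : ℝ → [0,∞] measurable, nonnegative integer edge weights β_{j,q}, β'_{j',q'}, γ_{j,j'} with every node of total degree exactly m, and A(u,v) = ∫_{(−∞,u]}∫_{(−∞,v]} x(u−a)x(v−b)|a−b|^{m(2H0−2)} db da), assume additionally that there is a constant C ≥ 1 such that A(u,v) ≤ C for all u, v ∈ ℝ and A(u,v) ≤ C |u−v|^{m(2H0−2)} whenever u ≠ v. Then, with b = ∑ β_{j,q}, b' = ∑ β'_{j',q'}, c = ∑ γ_{j,j'}: ∫_{(−∞,t]^k} ∫_{(−∞,t']^{k'}} ∏_{j} x(t−s_j) ∏_{j'} x(t'−s'_{j'}) ∏_{q<j} |s_j−s_q|^{β_{j,q}(2H0−2)} ∏_{q'<j'} |s'_{j'}−s'_{q'}|^{β'_{j',q'}(2H0−2)} ∏_{j,j'} |s_j−s'_{j'}|^{γ_{j,j'}(2H0−2)} ds' ds ≤ C^{(b+b'+c)/m} · min(1, |t−t'|^{c(2H0−2)}), where for t = t' the right-hand side is read as C^{(b+b'+c)/m}. 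-/

import Mathlib

open MeasureTheory Real Finset

/-- `A(u,v) = ∫_{(−∞,u]} ∫_{(−∞,v]} x(u−a) x(v−b) |a−b|^(m(2H0−2)) db da`, in `[0,∞]`. -/
noncomputable def pairIntegral (m : ℕ) (H0 : ℝ) (x : ℝ → ENNReal) (u v : ℝ) : ENNReal :=
  ∫⁻ a in Set.Iic u, ∫⁻ b in Set.Iic v,
    x (u - a) * x (v - b) * ENNReal.ofReal (|a - b| ^ ((m : ℝ) * (2*H0 - 2)))

/-!
Merge the two graphs into one graph on `Fin k ⊕ Fin k'`, whose nodes carry the times `t` and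
`t'`. Every node has degree `m`, so the integrand is `∏ f_{pq} ^ (w_{pq} / m)` over the edges,
where `f_{pq}(z) = x(τ_p − z_p) x(τ_q − z_q) |z_p − z_q|^(m(2H0−2))` depends only on `z_p, z_q`,
and the exponents of the edges at any node add up to `1`. Finner's generalized Hölder inequality
then bounds the integral by `∏ A(τ_p, τ_q) ^ (w_{pq} / m)`. Finally
`A(u,v) ≤ C (1 ∧ |u − v|^(m(2H0−2)))` and `(1 ∧ y)^θ = 1 ∧ y^θ`: only the `c` edges between
the two graphs see `|t − t'|`, and together they contribute `1 ∧ |t − t'|^(c(2H0−2))`.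
-/

open scoped ENNReal

namespace ENNReal

theorem rpow_sum_of_nonneg {ι : Type*} (a : ℝ≥0∞) {s : Finset ι} {f : ι → ℝ}
    (h : ∀ i ∈ s, 0 ≤ f i) : a ^ ∑ i ∈ s, f i = ∏ i ∈ s, a ^ f i := by
  induction s using Finset.cons_induction with
  | empty => simp
  | cons i s hi ih =>
    rw [forall_mem_cons] at h
    rw [sum_cons, prod_cons, ← ih h.2, rpow_add_of_nonneg _ _ h.1 (sum_nonneg h.2)]

theorem prod_rpow_le_rpow_sum_mul_prod_rpow {ι : Type*} {s : Finset ι} {a b : ι → ℝ≥0∞}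
    {κ : ℝ≥0∞} {θ : ι → ℝ} (hab : ∀ i ∈ s, a i ≤ κ * b i) (hθ : ∀ i ∈ s, 0 ≤ θ i) :
    ∏ i ∈ s, a i ^ θ i ≤ κ ^ (∑ i ∈ s, θ i) * ∏ i ∈ s, b i ^ θ i := by
  rw [rpow_sum_of_nonneg _ hθ, ← prod_mul_distrib]
  exact prod_le_prod' fun i hi =>
    (rpow_le_rpow (hab i hi) (hθ i hi)).trans_eq (mul_rpow_of_nonneg _ _ (hθ i hi))

theorem ofReal_rpow_mul_eq_rpow_div {y : ℝ} (hy : 0 ≤ y) {n c : ℝ} (hn : 0 ≤ n) (hc : 0 < c)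
    (r : ℝ) : ENNReal.ofReal (y ^ (n * r)) = ENNReal.ofReal (y ^ (c * r)) ^ (n / c) := by
  rw [ofReal_rpow_of_nonneg (Real.rpow_nonneg hy _) (div_nonneg hn hc.le), ← Real.rpow_mul hy]
  congr 2
  field_simp

theorem min_one_rpow {θ : ℝ} (hθ : 0 ≤ θ) (y : ℝ≥0∞) : min 1 y ^ θ = min 1 (y ^ θ) := by
  rw [(monotone_rpow_of_nonneg hθ).map_min, one_rpow]

end ENNReal

section Finner

variable {ι : Type*} [DecidableEq ι] {α : ι → Type*}

lemma DependsOn.update_eq {β : Type*} {f : (∀ i, α i) → β} {S : Set ι} (hf : DependsOn f S)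
    {i : ι} (hi : i ∉ S) (z : ∀ i, α i) (y : α i) : f (Function.update z i y) = f z :=
  hf fun _ hj => Function.update_of_ne (ne_of_mem_of_not_mem hj hi) _ _

variable [∀ i, MeasurableSpace (α i)] (μ : ∀ i, Measure (α i))

lemma DependsOn.lmarginal {f : (∀ i, α i) → ℝ≥0∞} {S : Set ι} (hf : DependsOn f S)
    (T : Finset ι) : DependsOn (∫⋯∫⁻_T, f ∂μ) S := by
  intro z z' h
  simp only [MeasureTheory.lmarginal]
  refine lintegral_congr fun y => hf fun j hj => ?_
  unfold Function.updateFinset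
  split_ifs
  · rfl
  · exact h j hj

theorem lmarginal_prod_rpow_le_prod_rpow_lmarginal [∀ i, SigmaFinite (μ i)]
    {ε : Type*} (E : Finset ε) (S : ε → Finset ι) (θ : ε → ℝ) (f : ε → (∀ i, α i) → ℝ≥0∞)
    (hf : ∀ e ∈ E, Measurable (f e)) (hfS : ∀ e ∈ E, DependsOn (f e) (S e))
    (hθ : ∀ e ∈ E, 0 ≤ θ e) (T : Finset ι) (hT : ∀ i ∈ T, ∑ e ∈ E with i ∈ S e, θ e = 1)
    (z : ∀ i, α i) :
    (∫⋯∫⁻_T, (fun y => ∏ e ∈ E, f e y ^ θ e) ∂μ) z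
      ≤ ∏ e ∈ E, (∫⋯∫⁻_(T ∩ S e), f e ∂μ) z ^ θ e := by
  induction T using Finset.induction generalizing z with
  | empty => simp
  | insert i T hi ih =>
    set M : ε → (∀ i, α i) → ℝ≥0∞ := fun e => ∫⋯∫⁻_(T ∩ S e), f e ∂μ
    have hM : ∀ e ∈ E, Measurable fun y => M e (Function.update z i y) :=
      fun e he => ((hf e he).lmarginal μ).comp (measurable_update z)
    have hM_update : ∀ e ∈ {e ∈ E | i ∉ S e}, ∀ y, M e (Function.update z i y) = M e z :=
      fun e he y => (((hfS e (mem_filter.1 he).1).lmarginal μ _).update_eq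
        (by exact_mod_cast (mem_filter.1 he).2) z y)
    have hM_insert : ∀ e ∈ {e ∈ E | i ∈ S e},
        ∫⁻ y, M e (Function.update z i y) ∂μ i = (∫⋯∫⁻_(insert i T ∩ S e), f e ∂μ) z :=
      fun e he => by
        rw [insert_inter_of_mem (mem_filter.1 he).2, lmarginal_insert _ (hf e (mem_filter.1 he).1)
          fun h => hi (mem_inter.1 h).1]
    have hprod : ∀ y, ∏ e ∈ E, M e (Function.update z i y) ^ θ e
        = (∏ e ∈ E with i ∈ S e, M e (Function.update z i y) ^ θ e)
          * ∏ e ∈ E with i ∉ S e, M e z ^ θ e := fun y => by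
      rw [← prod_filter_mul_prod_filter_not E (fun e => i ∈ S e)]
      exact congrArg _ (prod_congr rfl fun e he => by rw [hM_update e he])
    rw [lmarginal_insert _ (Finset.measurable_prod _ fun e he =>
      (hf e he).pow_const (θ e)) hi]
    calc ∫⁻ y, (∫⋯∫⁻_T, (fun y => ∏ e ∈ E, f e y ^ θ e) ∂μ) (Function.update z i y) ∂μ i
        ≤ ∫⁻ y, ∏ e ∈ E, M e (Function.update z i y) ^ θ e ∂μ i :=
          lintegral_mono fun y => ih (fun j hj => hT j (mem_insert_of_mem hj)) _
      _ = (∫⁻ y, ∏ e ∈ E with i ∈ S e, M e (Function.update z i y) ^ θ e ∂μ i)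
            * ∏ e ∈ E with i ∉ S e, M e z ^ θ e := by
          simp_rw [hprod]
          exact lintegral_mul_const _ (Finset.measurable_prod _ fun e he =>
            (hM e (mem_filter.1 he).1).pow_const _)
      _ ≤ (∏ e ∈ E with i ∈ S e, (∫⁻ y, M e (Function.update z i y) ∂μ i) ^ θ e)
            * ∏ e ∈ E with i ∉ S e, M e z ^ θ e := by
          gcongr
          exact ENNReal.lintegral_prod_norm_pow_le _
            (fun e he => (hM e (mem_filter.1 he).1).aemeasurable) (hT i (mem_insert_self i T))
            fun e he => hθ e (mem_filter.1 he).1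
      _ = ∏ e ∈ E, (∫⋯∫⁻_(insert i T ∩ S e), f e ∂μ) z ^ θ e := by
          rw [← prod_filter_mul_prod_filter_not E (fun e => i ∈ S e)]
          congr 1
          · exact prod_congr rfl fun e he => by rw [hM_insert e he]
          · exact prod_congr rfl fun e he => by
              rw [insert_inter_of_notMem (mem_filter.1 he).2]

end Finner

section Graph

variable {V : Type*} {m : ℕ} {H0 : ℝ} {x : ℝ → ℝ≥0∞}

lemma sum_filter_mem_pair [Fintype V] [DecidableEq V] {M : Type*} [AddCommMonoid M]
    (θ : V × V → M) (hθ : ∀ p, θ (p, p) = 0) (p : V) :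
    ∑ e with p ∈ ({e.1, e.2} : Finset V), θ e = ∑ q, (θ (p, q) + θ (q, p)) := by
  have hsplit : ∀ a b : V, (if p ∈ ({a, b} : Finset V) then θ (a, b) else 0)
      = (if p = a then θ (a, b) else 0) + (if p = b then θ (a, b) else 0) := by
    intro a b
    simp only [mem_insert, mem_singleton]
    split_ifs <;> subst_vars <;> simp_all
  rw [sum_filter, Fintype.sum_prod_type]
  simp only [hsplit, sum_add_distrib]
  simp

lemma prod_prod_mul_rpow_eq_prod [Fintype V] (a : V → ℝ≥0∞) (θ : V → V → ℝ)
    (hθ : ∀ p q, 0 ≤ θ p q) (hdeg : ∀ p, ∑ q, (θ p q + θ q p) = 1) :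
    ∏ p, ∏ q, (a p * a q) ^ θ p q = ∏ p, a p := by
  simp_rw [ENNReal.mul_rpow_of_nonneg _ _ (hθ _ _), prod_mul_distrib]
  rw [prod_comm (f := fun p q => a q ^ θ p q), ← prod_mul_distrib]
  refine prod_congr rfl fun p _ => ?_
  rw [← ENNReal.rpow_sum_of_nonneg _ fun q _ => hθ _ _,
    ← ENNReal.rpow_sum_of_nonneg _ fun q _ => hθ _ _,
    ← ENNReal.rpow_add_of_nonneg _ _ (sum_nonneg fun q _ => hθ _ _)
      (sum_nonneg fun q _ => hθ _ _), ← sum_add_distrib, hdeg, ENNReal.rpow_one]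

lemma sum_weight_div_eq_one [Fintype V] (hm : m ≠ 0) (w : V → V → ℕ)
    (hdeg : ∀ p, ∑ q, (w p q + w q p) = m) (p : V) :
    ∑ q, ((w p q : ℝ) / m + (w q p : ℝ) / m) = 1 := by
  simp_rw [← add_div, ← sum_div, div_eq_one_iff_eq ((Nat.cast_ne_zero (R := ℝ)).2 hm)]
  exact_mod_cast hdeg p

noncomputable def graphIntegrand [Fintype V] (H0 : ℝ) (x : ℝ → ℝ≥0∞) (τ : V → ℝ)
    (w : V → V → ℕ) (z : V → ℝ) : ℝ≥0∞ :=
  (∏ p, x (τ p - z p)) * ENNReal.ofReal (∏ p, ∏ q, |z p - z q| ^ ((w p q : ℝ) * (2*H0 - 2)))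

noncomputable def edgeKernel (m : ℕ) (H0 : ℝ) (x : ℝ → ℝ≥0∞) (τ : V → ℝ) (p q : V)
    (z : V → ℝ) : ℝ≥0∞ :=
  x (τ p - z p) * x (τ q - z q) * ENNReal.ofReal (|z p - z q| ^ ((m : ℝ) * (2*H0 - 2)))

lemma measurable_graphIntegrand [Fintype V] (hx : Measurable x) (τ : V → ℝ) (w : V → V → ℕ) :
    Measurable (graphIntegrand H0 x τ w) := by
  unfold graphIntegrand
  fun_prop

lemma measurable_edgeKernel (hx : Measurable x) (τ : V → ℝ) (p q : V) :
    Measurable (edgeKernel m H0 x τ p q) := by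
  unfold edgeKernel
  fun_prop

lemma dependsOn_edgeKernel [DecidableEq V] (τ : V → ℝ) (p q : V) :
    DependsOn (edgeKernel m H0 x τ p q) (({p, q} : Finset V) : Set V) := by
  intro z z' h
  simp only [edgeKernel, h p (by simp), h q (by simp)]

lemma lmarginal_edgeKernel [DecidableEq V] (hx : Measurable x) (τ : V → ℝ) {p q : V}
    (hpq : p ≠ q) (z : V → ℝ) :
    (∫⋯∫⁻_{p, q}, edgeKernel m H0 x τ p q ∂fun r => volume.restrict (Set.Iic (τ r))) z
      = pairIntegral m H0 x (τ p) (τ q) := by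
  rw [lmarginal_insert _ (measurable_edgeKernel hx τ p q) (by simpa using hpq)]
  simp_rw [lmarginal_singleton, edgeKernel, Function.update_self,
    Function.update_of_ne hpq, Function.update_self]
  rfl

lemma graphIntegrand_eq_prod_edgeKernel_rpow [Fintype V] (hm : m ≠ 0) (τ : V → ℝ)
    (w : V → V → ℕ) (hdeg : ∀ p, ∑ q, (w p q + w q p) = m) (z : V → ℝ) :
    graphIntegrand H0 x τ w z = ∏ p, ∏ q, edgeKernel m H0 x τ p q z ^ ((w p q : ℝ) / m) := by
  have hθ : ∀ p q, 0 ≤ (w p q : ℝ) / m := fun p q => by positivity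
  have hsplit : ∀ p q, edgeKernel m H0 x τ p q z ^ ((w p q : ℝ) / m)
      = (x (τ p - z p) * x (τ q - z q)) ^ ((w p q : ℝ) / m)
        * ENNReal.ofReal (|z p - z q| ^ ((m : ℝ) * (2*H0 - 2))) ^ ((w p q : ℝ) / m) :=
    fun p q => ENNReal.mul_rpow_of_nonneg _ _ (hθ p q)
  simp_rw [hsplit, prod_mul_distrib,
    prod_prod_mul_rpow_eq_prod _ _ hθ (sum_weight_div_eq_one hm w hdeg), graphIntegrand]
  congr 1
  rw [ENNReal.ofReal_prod_of_nonneg fun p _ => prod_nonneg fun q _ => by positivity]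
  refine prod_congr rfl fun p _ => ?_
  rw [ENNReal.ofReal_prod_of_nonneg fun q _ => by positivity]
  exact prod_congr rfl fun q _ => ENNReal.ofReal_rpow_mul_eq_rpow_div (abs_nonneg _)
    (Nat.cast_nonneg _) (by positivity) _

theorem lintegral_graphIntegrand_le [Fintype V] [DecidableEq V] (hm : m ≠ 0)
    (hx : Measurable x) (τ : V → ℝ) (w : V → V → ℕ) (hdiag : ∀ p, w p p = 0)
    (hdeg : ∀ p, ∑ q, (w p q + w q p) = m) :
    ∫⁻ z in Set.univ.pi (fun p => Set.Iic (τ p)), graphIntegrand H0 x τ w z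
      ≤ ∏ p, ∏ q, pairIntegral m H0 x (τ p) (τ q) ^ ((w p q : ℝ) / m) := by
  have hcover : ∀ p ∈ univ,
      ∑ e : V × V with p ∈ ({e.1, e.2} : Finset V), (w e.1 e.2 : ℝ) / m = 1 := fun p _ => by
    rw [sum_filter_mem_pair (fun e : V × V => (w e.1 e.2 : ℝ) / m) (fun q => by simp [hdiag])]
    exact sum_weight_div_eq_one hm w hdeg p
  simp_rw [graphIntegrand_eq_prod_edgeKernel_rpow hm τ w hdeg, ← Fintype.prod_prod_type']
  rw [volume_pi, Measure.restrict_pi_pi, lintegral_eq_lmarginal_univ 0]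
  refine (lmarginal_prod_rpow_le_prod_rpow_lmarginal (fun p => volume.restrict (Set.Iic (τ p)))
    (univ : Finset (V × V)) (fun e => {e.1, e.2}) (fun e => (w e.1 e.2 : ℝ) / m)
    (fun e => edgeKernel m H0 x τ e.1 e.2) (fun e _ => measurable_edgeKernel hx τ _ _)
    (fun e _ => dependsOn_edgeKernel τ _ _) (fun e _ => by positivity) univ hcover 0).trans_eq ?_
  refine prod_congr rfl fun ⟨p, q⟩ _ => ?_
  rcases eq_or_ne p q with rfl | hpq
  · simp [hdiag]
  · rw [univ_inter, lmarginal_edgeKernel hx τ hpq]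

lemma prod_pairIntegral_rpow_le [Fintype V] {κ : ℝ≥0∞} {b : ℝ → ℝ → ℝ≥0∞}
    (hA : ∀ u v, pairIntegral m H0 x u v ≤ κ * b u v) (τ : V → ℝ) (w : V → V → ℕ) :
    ∏ p, ∏ q, pairIntegral m H0 x (τ p) (τ q) ^ ((w p q : ℝ) / m)
      ≤ κ ^ (((∑ p, ∑ q, w p q : ℕ) : ℝ) / m) * ∏ p, ∏ q, b (τ p) (τ q) ^ ((w p q : ℝ) / m) := by
  simp_rw [← Fintype.prod_prod_type']
  convert ENNReal.prod_rpow_le_rpow_sum_mul_prod_rpow (s := univ)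
    (fun (e : V × V) _ => hA (τ e.1) (τ e.2)) (θ := fun e => (w e.1 e.2 : ℝ) / m)
    fun e _ => by positivity using 2
  rw [← Fintype.sum_prod_type', Nat.cast_sum, sum_div]

end Graph

theorem setLIntegral_univ_pi_sumElim {ι ι' X : Type*} [Fintype ι] [Fintype ι'] [MeasureSpace X]
    [SigmaFinite (volume : Measure X)] (A : ι ⊕ ι' → Set X) {f : (ι ⊕ ι' → X) → ℝ≥0∞}
    (hf : Measurable f) :
    ∫⁻ s in Set.univ.pi (fun i => A (.inl i)), ∫⁻ s' in Set.univ.pi (fun i => A (.inr i)),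
        f (Sum.elim s s')
      = ∫⁻ z in Set.univ.pi A, f z := by
  simp_rw [volume_pi, Measure.restrict_pi_pi]
  rw [← (measurePreserving_sumPiEquivProdPi_symm _).lintegral_comp hf]
  exact (lintegral_prod _
    (hf.comp (MeasurableEquiv.sumPiEquivProdPi fun _ => X).symm.measurable).aemeasurable).symm

noncomputable def decayBound (a u v : ℝ) : ℝ≥0∞ :=
  if u = v then 1 else min 1 (ENNReal.ofReal (|u - v| ^ a))

lemma decayBound_self (a u : ℝ) : decayBound a u u = 1 := if_pos rfl

lemma decayBound_rpow {n c : ℝ} (hn : 0 ≤ n) (hc : 0 < c) (r u v : ℝ) :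
    decayBound (c * r) u v ^ (n / c) = decayBound (n * r) u v := by
  unfold decayBound
  split_ifs
  · exact ENNReal.one_rpow _
  · rw [ENNReal.min_one_rpow (div_nonneg hn hc.le),
      ← ENNReal.ofReal_rpow_mul_eq_rpow_div (abs_nonneg _) hn hc]

lemma pairIntegral_le_mul_decayBound {m : ℕ} {H0 C : ℝ} {x : ℝ → ℝ≥0∞}
    (hA1 : ∀ u v : ℝ, pairIntegral m H0 x u v ≤ ENNReal.ofReal C)
    (hA2 : ∀ u v : ℝ, u ≠ v →
      pairIntegral m H0 x u v ≤ ENNReal.ofReal (C * |u - v| ^ ((m : ℝ) * (2*H0 - 2))))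
    (u v : ℝ) :
    pairIntegral m H0 x u v ≤ ENNReal.ofReal C * decayBound ((m : ℝ) * (2*H0 - 2)) u v := by
  unfold decayBound
  split_ifs with huv
  · simpa using hA1 u v
  · rw [mul_min, mul_one, ← ENNReal.ofReal_mul' (by positivity)]
    exact le_min (hA1 u v) (hA2 u v huv)

section TwoGraph

variable {k k' : ℕ}

def twoGraphWeight (β : Fin k → Fin k → ℕ) (β' : Fin k' → Fin k' → ℕ) (γ : Fin k → Fin k' → ℕ) :
    Fin k ⊕ Fin k' → Fin k ⊕ Fin k' → ℕ
  | .inl j, .inl q => if q < j then β j q else 0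
  | .inl j, .inr j' => γ j j'
  | .inr _, .inl _ => 0
  | .inr j', .inr q' => if q' < j' then β' j' q' else 0

variable {β : Fin k → Fin k → ℕ} {β' : Fin k' → Fin k' → ℕ} {γ : Fin k → Fin k' → ℕ}

lemma twoGraphWeight_self (p : Fin k ⊕ Fin k') : twoGraphWeight β β' γ p p = 0 := by
  rcases p with j | j' <;> simp [twoGraphWeight]

lemma sum_twoGraphWeight :
    ∑ p, ∑ q, twoGraphWeight β β' γ p q
      = (∑ j : Fin k, ∑ q ∈ univ.filter (fun q => q < j), β j q)
        + (∑ j' : Fin k', ∑ q' ∈ univ.filter (fun q' => q' < j'), β' j' q')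
        + (∑ j : Fin k, ∑ j' : Fin k', γ j j') := by
  simp [Fintype.sum_sum_type, twoGraphWeight, sum_filter, sum_add_distrib]
  ring

lemma twoGraphWeight_degree {m : ℕ}
    (hdeg : ∀ j : Fin k,
      (∑ q ∈ univ.filter (fun q => q < j), β j q)
        + (∑ p ∈ univ.filter (fun p => j < p), β p j)
        + (∑ j' : Fin k', γ j j') = m)
    (hdeg' : ∀ j' : Fin k',
      (∑ q' ∈ univ.filter (fun q' => q' < j'), β' j' q')
        + (∑ p' ∈ univ.filter (fun p' => j' < p'), β' p' j')
        + (∑ j : Fin k, γ j j') = m)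
    (p : Fin k ⊕ Fin k') : ∑ q, (twoGraphWeight β β' γ p q + twoGraphWeight β β' γ q p) = m := by
  rcases p with j | j'
  · rw [← hdeg j]
    simp [Fintype.sum_sum_type, twoGraphWeight, sum_filter, sum_add_distrib]
    ring
  · rw [← hdeg' j']
    simp [Fintype.sum_sum_type, twoGraphWeight, sum_filter, sum_add_distrib]
    ring

lemma graphIntegrand_twoGraph (H0 t t' : ℝ) (x : ℝ → ℝ≥0∞) (s : Fin k → ℝ) (s' : Fin k' → ℝ) :
    graphIntegrand H0 x (Sum.elim (fun _ => t) (fun _ => t')) (twoGraphWeight β β' γ)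
        (Sum.elim s s')
      = (∏ j, x (t - s j)) * (∏ j', x (t' - s' j')) *
        ENNReal.ofReal
          ((∏ j : Fin k, ∏ q ∈ univ.filter (fun q => q < j),
              |s j - s q| ^ ((β j q : ℝ) * (2*H0 - 2)))
            * (∏ j' : Fin k', ∏ q' ∈ univ.filter (fun q' => q' < j'),
                |s' j' - s' q'| ^ ((β' j' q' : ℝ) * (2*H0 - 2)))
            * (∏ j : Fin k, ∏ j' : Fin k',
                |s j - s' j'| ^ ((γ j j' : ℝ) * (2*H0 - 2)))) := by
  simp only [graphIntegrand, Fintype.prod_sum_type, Sum.elim_inl, Sum.elim_inr, prod_filter]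
  congr 2
  simp [twoGraphWeight, prod_mul_distrib, apply_ite]
  ring

lemma prod_decayBound_twoGraph (m : ℕ) (a t t' : ℝ) :
    ∏ p, ∏ q, decayBound a (Sum.elim (fun _ => t) (fun _ => t') p)
        (Sum.elim (fun _ => t) (fun _ => t') q) ^ ((twoGraphWeight β β' γ p q : ℝ) / m)
      = decayBound a t t' ^ (((∑ j : Fin k, ∑ j' : Fin k', γ j j' : ℕ) : ℝ) / m) := by
  simp only [Fintype.prod_sum_type, Sum.elim_inl, Sum.elim_inr, decayBound_self,
    ENNReal.one_rpow, prod_const_one, one_mul, twoGraphWeight, CharP.cast_eq_zero, zero_div,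
    ENNReal.rpow_zero, mul_one]
  calc ∏ j, ∏ j', decayBound a t t' ^ ((γ j j' : ℝ) / m)
      = ∏ j, decayBound a t t' ^ ∑ j', ((γ j j' : ℝ) / m) :=
        prod_congr rfl fun j _ => (ENNReal.rpow_sum_of_nonneg _ fun _ _ => by positivity).symm
    _ = decayBound a t t' ^ ∑ j, ∑ j', ((γ j j' : ℝ) / m) :=
        (ENNReal.rpow_sum_of_nonneg _ fun _ _ => sum_nonneg fun _ _ => by positivity).symm
    _ = _ := by simp_rw [← sum_div, Nat.cast_sum]

end TwoGraph

theorem two_graph_covariance_decay_general (m k k' : ℕ) (hm : 1 ≤ m)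
    (H0 : ℝ) (t t' : ℝ)
    (x : ℝ → ENNReal) (hx : Measurable x)
    (β : Fin k → Fin k → ℕ) (β' : Fin k' → Fin k' → ℕ) (γ : Fin k → Fin k' → ℕ)
    (hdeg : ∀ j : Fin k,
      (∑ q ∈ univ.filter (fun q => q < j), β j q)
        + (∑ p ∈ univ.filter (fun p => j < p), β p j)
        + (∑ j' : Fin k', γ j j') = m)
    (hdeg' : ∀ j' : Fin k',
      (∑ q' ∈ univ.filter (fun q' => q' < j'), β' j' q')
        + (∑ p' ∈ univ.filter (fun p' => j' < p'), β' p' j')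
        + (∑ j : Fin k, γ j j') = m)
    (C : ℝ)
    (hA1 : ∀ u v : ℝ, pairIntegral m H0 x u v ≤ ENNReal.ofReal C)
    (hA2 : ∀ u v : ℝ, u ≠ v →
      pairIntegral m H0 x u v ≤ ENNReal.ofReal (C * |u - v| ^ ((m : ℝ) * (2*H0 - 2)))) :
    (∫⁻ s in Set.univ.pi (fun _ : Fin k => Set.Iic t),
      ∫⁻ s' in Set.univ.pi (fun _ : Fin k' => Set.Iic t'),
        (∏ j, x (t - s j)) * (∏ j', x (t' - s' j')) *
        ENNReal.ofReal
          ((∏ j : Fin k, ∏ q ∈ univ.filter (fun q => q < j),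
              |s j - s q| ^ ((β j q : ℝ) * (2*H0 - 2)))
            * (∏ j' : Fin k', ∏ q' ∈ univ.filter (fun q' => q' < j'),
                |s' j' - s' q'| ^ ((β' j' q' : ℝ) * (2*H0 - 2)))
            * (∏ j : Fin k, ∏ j' : Fin k',
                |s j - s' j'| ^ ((γ j j' : ℝ) * (2*H0 - 2)))))
      ≤ ENNReal.ofReal C
          ^ ((((∑ j : Fin k, ∑ q ∈ univ.filter (fun q => q < j), β j q)
              + (∑ j' : Fin k', ∑ q' ∈ univ.filter (fun q' => q' < j'), β' j' q')
              + (∑ j : Fin k, ∑ j' : Fin k', γ j j') : ℕ) : ℝ) / m)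
        * (if t = t' then 1
            else min 1 (ENNReal.ofReal
              (|t - t'| ^ (((∑ j : Fin k, ∑ j' : Fin k', γ j j' : ℕ) : ℝ) * (2*H0 - 2))))) := by
  have hm0 : m ≠ 0 := by omega
  set τ : Fin k ⊕ Fin k' → ℝ := Sum.elim (fun _ => t) (fun _ => t')
  set w := twoGraphWeight β β' γ
  calc _ = ∫⁻ z in Set.univ.pi (fun p => Set.Iic (τ p)), graphIntegrand H0 x τ w z := by
        simp_rw [← setLIntegral_univ_pi_sumElim _ (measurable_graphIntegrand hx τ w), τ, w,
          graphIntegrand_twoGraph, Sum.elim_inl, Sum.elim_inr]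
    _ ≤ ∏ p, ∏ q, pairIntegral m H0 x (τ p) (τ q) ^ ((w p q : ℝ) / m) :=
        lintegral_graphIntegrand_le hm0 hx τ w twoGraphWeight_self
          (twoGraphWeight_degree hdeg hdeg')
    _ ≤ ENNReal.ofReal C ^ (((∑ p, ∑ q, w p q : ℕ) : ℝ) / m)
          * ∏ p, ∏ q, decayBound ((m : ℝ) * (2*H0 - 2)) (τ p) (τ q) ^ ((w p q : ℝ) / m) :=
        prod_pairIntegral_rpow_le (pairIntegral_le_mul_decayBound hA1 hA2) τ w
    _ = _ := by
        rw [sum_twoGraphWeight, prod_decayBound_twoGraph,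
          decayBound_rpow (Nat.cast_nonneg _) (by positivity)]
        rfl

/-- Covariance decay of graph-entangled integrals (Lemma 4.1 of the paper): under the
decay assumption `A(u,v) ≤ C` and `A(u,v) ≤ C|u−v|^(m(2H0−2))` for `u ≠ v`, the
two-graph integral is bounded by `C^((b+b'+c)/m) · min(1,|t−t'|^(c(2H0−2)))`
(read as `C^((b+b'+c)/m)` when `t = t'`). -/
theorem two_graph_covariance_decay (m k k' : ℕ) (hm : 1 ≤ m) (hk : 1 ≤ k) (hk' : 1 ≤ k')
    (H0 : ℝ) (hH0 : 1/2 < H0) (hH0' : H0 < 1) (t t' : ℝ)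
    (x : ℝ → ENNReal) (hx : Measurable x)
    (β : Fin k → Fin k → ℕ) (β' : Fin k' → Fin k' → ℕ) (γ : Fin k → Fin k' → ℕ)
    (hdeg : ∀ j : Fin k,
      (∑ q ∈ univ.filter (fun q => q < j), β j q)
        + (∑ p ∈ univ.filter (fun p => j < p), β p j)
        + (∑ j' : Fin k', γ j j') = m)
    (hdeg' : ∀ j' : Fin k',
      (∑ q' ∈ univ.filter (fun q' => q' < j'), β' j' q')
        + (∑ p' ∈ univ.filter (fun p' => j' < p'), β' p' j')
        + (∑ j : Fin k, γ j j') = m)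
    (C : ℝ) (hC : 1 ≤ C)
    (hA1 : ∀ u v : ℝ, pairIntegral m H0 x u v ≤ ENNReal.ofReal C)
    (hA2 : ∀ u v : ℝ, u ≠ v →
      pairIntegral m H0 x u v ≤ ENNReal.ofReal (C * |u - v| ^ ((m : ℝ) * (2*H0 - 2)))) :
    (∫⁻ s in Set.univ.pi (fun _ : Fin k => Set.Iic t),
      ∫⁻ s' in Set.univ.pi (fun _ : Fin k' => Set.Iic t'),
        (∏ j, x (t - s j)) * (∏ j', x (t' - s' j')) *
        ENNReal.ofReal
          ((∏ j : Fin k, ∏ q ∈ univ.filter (fun q => q < j),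
              |s j - s q| ^ ((β j q : ℝ) * (2*H0 - 2)))
            * (∏ j' : Fin k', ∏ q' ∈ univ.filter (fun q' => q' < j'),
                |s' j' - s' q'| ^ ((β' j' q' : ℝ) * (2*H0 - 2)))
            * (∏ j : Fin k, ∏ j' : Fin k',
                |s j - s' j'| ^ ((γ j j' : ℝ) * (2*H0 - 2)))))
      ≤ ENNReal.ofReal C
          ^ ((((∑ j : Fin k, ∑ q ∈ univ.filter (fun q => q < j), β j q)
              + (∑ j' : Fin k', ∑ q' ∈ univ.filter (fun q' => q' < j'), β' j' q')
              + (∑ j : Fin k, ∑ j' : Fin k', γ j j') : ℕ) : ℝ) / m)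
        * (if t = t' then 1
            else min 1 (ENNReal.ofReal
              (|t - t'| ^ (((∑ j : Fin k, ∑ j' : Fin k', γ j j' : ℕ) : ℝ) * (2*H0 - 2))))) :=
  two_graph_covariance_decay_general m k k' hm H0 t t' x hx β β' γ hdeg hdeg' C hA1 hA2
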